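/- Let h > 0, ω > 0, and c > 0. Define the weights α_{-1} = ω(h²(2ω−5) − 3c²)/(3c²h(ω+1)), α_0 = (ω−1)/(hω) − 2h(ω−1)/(3c²), α_{+1} = (h²(5ω−2)/c² + 3/ω)/(3h(ω+1)). Then for every four-times continuously differentiable function f : ℝ → ℝ and every point x, the approximation error α_{-1} f(x−h) + α_0 f(x) + α_{+1} f(x+ωh) − f'(x) equals (ω/6)(6 f'(x)/c² + f'''(x)) h² + O(h³) as h → 0 (with ω, c fixed). -/

import Mathlib

/-!
Write `f (x + t) = T(t) + R(t)` with `T` the cubic Taylor polynomial of `f` at `x`, so that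
`R(t) = O(t⁴)`. On the Taylor polynomials the stencil reproduces `f'(x)` and the stated `h²` term
exactly, up to a polynomial multiple of `h³`. The weights on `f (x - h)` and `f (x + ω * h)` are
`O(1/h)`, so they turn the remainders `R(-h)`, `R(ω * h)` into `O(h³)`.
-/

open Filter Asymptotics Topology Set

theorem taylor_isBigO_univ {E : Type*} [NormedAddCommGroup E] [NormedSpace ℝ E]
    {f : ℝ → E} {x₀ : ℝ} {n : ℕ} (hf : ContDiff ℝ (n + 1) f) :
    (fun x ↦ f x - taylorWithinEval f n univ x₀ x) =O[𝓝 x₀] fun x ↦ (x - x₀) ^ (n + 1) := by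
  have hlittle := (taylor_isLittleO_univ (n := n + 1) (x₀ := x₀) (by exact_mod_cast hf)).isBigO
  have hlast : (fun x ↦ (((n + 1 : ℝ) * n.factorial)⁻¹ * (x - x₀) ^ (n + 1)) •
      iteratedDerivWithin (n + 1) f univ x₀) =O[𝓝 x₀] fun x ↦ (x - x₀) ^ (n + 1) :=
    isBigO_of_le' (c := ‖((n + 1 : ℝ) * n.factorial)⁻¹‖ * ‖iteratedDerivWithin (n + 1) f univ x₀‖)
      _ fun x ↦ (norm_smul_le _ _).trans_eq <| by rw [norm_mul]; ring
  refine (hlittle.add hlast).congr_left fun x ↦ ?_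
  rw [taylorWithinEval_succ]
  abel

noncomputable def taylorCubic (f : ℝ → ℝ) (x t : ℝ) : ℝ :=
  f x + deriv f x * t + iteratedDeriv 2 f x / 2 * t ^ 2 + iteratedDeriv 3 f x / 6 * t ^ 3

theorem taylorWithinEval_three_univ_add (f : ℝ → ℝ) (x t : ℝ) :
    taylorWithinEval f 3 univ x (x + t) = taylorCubic f x t := by
  simp only [taylorWithinEval_succ, taylor_within_apply, zero_add, Finset.range_one,
    add_sub_cancel_left, iteratedDerivWithin_univ, smul_eq_mul, Finset.sum_singleton,
    Nat.factorial, Nat.cast_one, inv_one, pow_zero, mul_one, iteratedDeriv_zero, one_mul,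
    CharP.cast_eq_zero, pow_one, iteratedDeriv_one, Nat.succ_eq_add_one, Nat.reduceAdd,
    Nat.cast_ofNat, mul_inv_rev, taylorCubic]
  ring

theorem isBigO_sub_taylorCubic_mul {f : ℝ → ℝ} (hf : ContDiff ℝ 4 f) (x s : ℝ) :
    (fun h ↦ f (x + s * h) - taylorCubic f x (s * h)) =O[𝓝 0] fun h ↦ h ^ 4 := by
  have hlim : Tendsto (fun h : ℝ ↦ x + s * h) (𝓝 0) (𝓝 x) :=
    Continuous.tendsto' (by fun_prop) 0 x (by simp)
  have := (taylor_isBigO_univ (n := 3) (x₀ := x) hf).comp_tendsto hlim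
  simp only [Function.comp_def, add_sub_cancel_left, taylorWithinEval_three_univ_add] at this
  refine this.trans ?_
  simp_rw [mul_pow]
  exact isBigO_const_mul_self _ _ _

theorem Asymptotics.IsBigO.mul_div_self_pow {l : Filter ℝ} {a r : ℝ → ℝ} {n : ℕ}
    (ha : a =O[l] fun _ ↦ (1 : ℝ)) (hr : r =O[l] fun h ↦ h ^ (n + 1)) :
    (fun h ↦ a h * r h / h) =O[l] fun h ↦ h ^ n := by
  have hdiv : (fun h : ℝ ↦ h ^ (n + 1) / h) =O[l] fun h ↦ h ^ n := by
    refine isBigO_of_le _ fun h ↦ ?_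
    rcases eq_or_ne h 0 with rfl | hh
    · simp
    · rw [pow_succ, mul_div_cancel_right₀ _ hh]
  simpa [div_eq_mul_inv, mul_assoc] using
    ha.mul ((hr.mul (isBigO_refl (fun h : ℝ ↦ h⁻¹) l)).trans
      (by simpa [div_eq_mul_inv] using hdiv))

theorem rbf_fd_error_eq_cubic_add_remainders (f : ℝ → ℝ) {ω c h : ℝ} (x : ℝ) (hω : ω ≠ 0)
    (hω₁ : ω + 1 ≠ 0) (hc : c ≠ 0) (hh : h ≠ 0) :
    (ω * (h ^ 2 * (2 * ω - 5) - 3 * c ^ 2) / (3 * c ^ 2 * h * (ω + 1))) * f (x - h)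
          + ((ω - 1) / (h * ω) - 2 * h * (ω - 1) / (3 * c ^ 2)) * f x
          + ((h ^ 2 * (5 * ω - 2) / c ^ 2 + 3 / ω) / (3 * h * (ω + 1))) * f (x + ω * h)
          - deriv f x
          - (ω / 6) * (6 * deriv f x / c ^ 2 + iteratedDeriv 3 f x) * h ^ 2
      = h ^ 3 * (5 * ω * (ω - 1) / (6 * c ^ 2) * iteratedDeriv 2 f x
          + ω * (5 * ω ^ 3 - 2 * ω ^ 2 - 2 * ω + 5) / (18 * c ^ 2 * (ω + 1))
            * iteratedDeriv 3 f x * h)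
        + ω * (h ^ 2 * (2 * ω - 5) - 3 * c ^ 2) / (3 * c ^ 2 * (ω + 1))
            * (f (x - h) - taylorCubic f x (-h)) / h
        + (h ^ 2 * (5 * ω - 2) / c ^ 2 + 3 / ω) / (3 * (ω + 1))
            * (f (x + ω * h) - taylorCubic f x (ω * h)) / h := by
  unfold taylorCubic
  field_simp
  ring

theorem rbf_fd_first_derivative_error
    (ω c : ℝ) (hω : 0 < ω) (hc : 0 < c)
    (f : ℝ → ℝ) (hf : ContDiff ℝ 4 f) (x : ℝ) :
    (fun h : ℝ =>
        (ω * (h ^ 2 * (2 * ω - 5) - 3 * c ^ 2) / (3 * c ^ 2 * h * (ω + 1))) * f (x - h)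
          + ((ω - 1) / (h * ω) - 2 * h * (ω - 1) / (3 * c ^ 2)) * f x
          + ((h ^ 2 * (5 * ω - 2) / c ^ 2 + 3 / ω) / (3 * h * (ω + 1))) * f (x + ω * h)
          - deriv f x
          - (ω / 6) * (6 * deriv f x / c ^ 2 + iteratedDeriv 3 f x) * h ^ 2)
      =O[𝓝[>] (0 : ℝ)] fun h : ℝ => h ^ 3 := by
  have bounded {p : ℝ → ℝ} (hp : Continuous p) : p =O[𝓝 0] fun _ ↦ (1 : ℝ) :=
    (hp.tendsto 0).isBigO_one ℝ
  have hleft : (fun h ↦ f (x - h) - taylorCubic f x (-h)) =O[𝓝 0] fun h ↦ h ^ 4 := by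
    simpa [← sub_eq_add_neg] using isBigO_sub_taylorCubic_mul hf x (-1)
  have hcubic := (isBigO_refl (fun h : ℝ ↦ h ^ 3) _).mul (bounded (p := fun h ↦
    5 * ω * (ω - 1) / (6 * c ^ 2) * iteratedDeriv 2 f x
      + ω * (5 * ω ^ 3 - 2 * ω ^ 2 - 2 * ω + 5) / (18 * c ^ 2 * (ω + 1)) * iteratedDeriv 3 f x * h)
    (by fun_prop))
  simp only [mul_one] at hcubic
  have hsum := (hcubic.add <|
      (bounded (p := fun h ↦ ω * (h ^ 2 * (2 * ω - 5) - 3 * c ^ 2) / (3 * c ^ 2 * (ω + 1)))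
        (by fun_prop)).mul_div_self_pow hleft).add <|
      (bounded (p := fun h ↦ (h ^ 2 * (5 * ω - 2) / c ^ 2 + 3 / ω) / (3 * (ω + 1)))
        (by fun_prop)).mul_div_self_pow (isBigO_sub_taylorCubic_mul hf x ω)
  refine (hsum.mono nhdsWithin_le_nhds).congr' ?_ (by simp)
  filter_upwards [self_mem_nhdsWithin] with h (hh : 0 < h)
  exact (rbf_fd_error_eq_cubic_add_remainders f x hω.ne' (by positivity) hc.ne' hh.ne').symm
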